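/- For every policy π, every h ∈ [H], and every state-action pair (s_h,a_h) ∈ S×A, the marginal occupancy under the original MDP dominates that under the pessimistic augmented MDP: d^π_h(s_h,a_h) ≥ d^{†π}_h(s_h,a_h). -/

import Mathlib

open MeasureTheory Finset
open scoped BigOperators ENNReal Classical

noncomputable section

/-- A finite-horizon (time-inhomogeneous) Markov Decision Process with finite state space `S`,
finite action space `A`, horizon `H`, transition kernels `P h s a : S → ℝ`, random rewards with
distribution `R h s a : PMF ℝ` supported in `[0,1]`, and initial distribution `d1`.
Time steps are indexed `h ∈ {1, …, H}`. -/
structure FinMDP (S A : Type) [Fintype S] [Fintype A] where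
  H : ℕ
  P : ℕ → S → A → S → ℝ
  R : ℕ → S → A → PMF ℝ
  d1 : S → ℝ
  P_nonneg : ∀ h s a s', 0 ≤ P h s a s'
  P_sum : ∀ h s a, ∑ s', P h s a s' = 1
  R_mem : ∀ h s a, ∀ x ∈ (R h s a).support, x ∈ Set.Icc (0 : ℝ) 1
  d1_nonneg : ∀ s, 0 ≤ d1 s
  d1_sum : ∑ s, d1 s = 1

/-- A (Markovian, time-dependent) policy. -/
structure Policy (S A : Type) [Fintype A] where
  p : ℕ → S → A → ℝ
  nonneg : ∀ h s a, 0 ≤ p h s a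
  sum_one : ∀ h s, ∑ a, p h s a = 1

/-- Mean of a real-valued PMF. -/
def pmfMean (q : PMF ℝ) : ℝ := ∑' x, (q x).toReal * x

/-- Variance of a real-valued PMF. -/
def pmfVarR (q : PMF ℝ) : ℝ := ∑' x, (q x).toReal * (x - pmfMean q) ^ 2

/-- Expectation of `f` under a PMF. -/
def pmfExp {τ : Type} (q : PMF τ) (f : τ → ℝ) : ℝ := ∑' t, (q t).toReal * f t

/-- Variance of `f` under a PMF. -/
def pmfVar {τ : Type} (q : PMF τ) (f : τ → ℝ) : ℝ := pmfExp q fun t => (f t - pmfExp q f) ^ 2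

/-- Squared Hellinger distance between two PMFs. -/
def hellSq {τ : Type} (q q' : PMF τ) : ℝ := 1 - ∑' t, Real.sqrt ((q t).toReal * (q' t).toReal)

/-- Probability of an event under a PMF. -/
def prEvent {τ : Type} (q : PMF τ) (E : Set τ) : ℝ≥0∞ := q.toOuterMeasure E

/-- Variance of `f` under a finitely supported distribution given by a weight function `p`. -/
def varDist {τ : Type} [Fintype τ] (p f : τ → ℝ) : ℝ :=
  ∑ t, p t * (f t - ∑ t', p t' * f t') ^ 2

/-- Squared Hellinger distance between two finitely supported distributions. -/
def hellFin {τ : Type} [Fintype τ] (p q : τ → ℝ) : ℝ := 1 - ∑ t, Real.sqrt (p t * q t)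

variable {S A : Type} [Fintype S] [Fintype A]

/-- Mean reward at `(h, s, a)`. -/
def meanR (M : FinMDP S A) (h : ℕ) (s : S) (a : A) : ℝ := pmfMean (M.R h s a)

/-- Reward variance at `(h, s, a)`. -/
def varR (M : FinMDP S A) (h : ℕ) (s : S) (a : A) : ℝ := pmfVarR (M.R h s a)

/-- `Var_{P_h(·|s,a)}(r_h + V)`: variance of the (conditionally independent) random reward plus
next-state value `V` given `(s,a)` at step `h`. -/
def varTot (M : FinMDP S A) (h : ℕ) (s : S) (a : A) (V : S → ℝ) : ℝ :=
  varR M h s a + varDist (M.P h s a) V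

/-- Value function `V^π_h`, with `V^π_{H+1} = 0`. -/
def Vpi (M : FinMDP S A) (π : Policy S A) (h : ℕ) : S → ℝ :=
  if hh : M.H + 1 ≤ h then fun _ => 0
  else fun s => ∑ a, π.p h s a * (meanR M h s a + ∑ s', M.P h s a s' * Vpi M π (h + 1) s')
termination_by M.H + 1 - h
decreasing_by omega

/-- Q-value function `Q^π_h`. -/
def Qpi (M : FinMDP S A) (π : Policy S A) (h : ℕ) (s : S) (a : A) : ℝ :=
  meanR M h s a + ∑ s', M.P h s a s' * Vpi M π (h + 1) s'

/-- Performance `v^π = E_{s₁ ∼ d₁}[V^π_1(s₁)]`. -/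
def vOf (M : FinMDP S A) (π : Policy S A) : ℝ := ∑ s, M.d1 s * Vpi M π 1 s

/-- `π` is an optimal policy: it dominates every policy at every step and state. -/
def IsOptimal (M : FinMDP S A) (π : Policy S A) : Prop :=
  ∀ (π' : Policy S A) (h : ℕ) (s : S), Vpi M π' h s ≤ Vpi M π h s

/-- Optimal value `v⋆`. -/
def vstar (M : FinMDP S A) : ℝ := ⨆ π : Policy S A, vOf M π

/-- Marginal state distribution `d^π_h(s)` (1-indexed; `dState 1 = d₁`). -/
def dState (M : FinMDP S A) (π : Policy S A) : ℕ → S → ℝ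
  | 0 => fun _ => 0
  | 1 => M.d1
  | h + 2 => fun s' => ∑ s, ∑ a, dState M π (h + 1) s * π.p (h + 1) s a * M.P (h + 1) s a s'

/-- Marginal state-action occupancy `d^π_h(s,a)`. -/
def dOcc (M : FinMDP S A) (π : Policy S A) (h : ℕ) (s : S) (a : A) : ℝ :=
  dState M π h s * π.p h s a

/-- Marginal state distribution at time `t` of the process started at state `s0` at time `h0`. -/
def dStateFrom [DecidableEq S] (M : FinMDP S A) (π : Policy S A) (h0 : ℕ) (s0 : S) (t : ℕ) :
    S → ℝ :=
  if ht : t ≤ h0 then fun s => if s = s0 then 1 else 0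
  else fun s' => ∑ s, ∑ a, dStateFrom M π h0 s0 (t - 1) s * π.p (t - 1) s a * M.P (t - 1) s a s'
termination_by t
decreasing_by omega

/-- `d̄_m`: minimal positive marginal state-action probability of the behavior policy. -/
def dbar (M : FinMDP S A) (μ : Policy S A) : ℝ :=
  sInf {x : ℝ | ∃ h ∈ Finset.Icc 1 M.H, ∃ s a, 0 < dOcc M μ h s a ∧ x = dOcc M μ h s a}

/-- `(s,a)` is reachable at step `h` by some policy. -/
def Reachable (M : FinMDP S A) (h : ℕ) (s : S) (a : A) : Prop :=
  ∃ π : Policy S A, 0 < dOcc M π h s a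

/-- `d_m`: minimal behavior probability over all reachable state-action pairs. -/
def dmin (M : FinMDP S A) (μ : Policy S A) : ℝ :=
  sInf {x : ℝ | ∃ h ∈ Finset.Icc 1 M.H, ∃ s a, Reachable M h s a ∧ x = dOcc M μ h s a}

/-- The class `𝒢`: there is an optimal policy covered by the behavior policy `μ`. -/
def inG (μ : Policy S A) (M : FinMDP S A) : Prop :=
  ∃ π : Policy S A, IsOptimal M π ∧ ∀ h s a, 0 < dOcc M π h s a → 0 < dOcc M μ h s a

/-- `ι = log(H·S·A/δ)`. -/
def iotaLog (H nS nA : ℕ) (δ : ℝ) : ℝ := Real.log (H * nS * nA / δ)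

/-- A trajectory (episode): list of `(state, action, reward)` steps plus a final state. -/
structure Traj (S A : Type) where
  steps : List (S × A × ℝ)
  final : S

/-- PMF attached to a finitely supported real distribution. -/
def finPMF {τ : Type} [Fintype τ] (p : τ → ℝ) (h0 : ∀ t, 0 ≤ p t) (h1 : ∑ t, p t = 1) : PMF τ :=
  PMF.ofFintype (fun t => ENNReal.ofReal (p t))
    (by rw [← ENNReal.ofReal_sum_of_nonneg (fun t _ => h0 t), h1, ENNReal.ofReal_one])

def actPMF (M : FinMDP S A) (π : Policy S A) (h : ℕ) (s : S) : PMF A :=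
  finPMF (π.p h s) (π.nonneg h s) (π.sum_one h s)

def transPMF (M : FinMDP S A) (h : ℕ) (s : S) (a : A) : PMF S :=
  finPMF (M.P h s a) (M.P_nonneg h s a) (M.P_sum h s a)

def initPMF (M : FinMDP S A) : PMF S := finPMF M.d1 M.d1_nonneg M.d1_sum

/-- Law of the trajectory generated by `π` starting at state `s` at time `h`, for `k` steps. -/
def trajFrom (M : FinMDP S A) (π : Policy S A) : ℕ → ℕ → S → PMF (Traj S A)
  | _, 0, s => PMF.pure ⟨[], s⟩
  | h, k + 1, s =>
      (actPMF M π h s).bind fun a =>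
        (M.R h s a).bind fun r =>
          (transPMF M h s a).bind fun s' =>
            (trajFrom M π (h + 1) k s').map fun T => ⟨(s, a, r) :: T.steps, T.final⟩

/-- Law of a full episode generated by the behavior policy `μ`. -/
def episodePMF (M : FinMDP S A) (μ : Policy S A) : PMF (Traj S A) :=
  (initPMF M).bind fun s => trajFrom M μ 1 M.H s

/-- Law of `n` i.i.d. draws from `q` (a dataset). -/
def iidPMF {τ : Type} (q : PMF τ) : ℕ → PMF (List τ)
  | 0 => PMF.pure []
  | n + 1 => q.bind fun x => (iidPMF q n).map fun l => x :: l

/-- Total realized reward of a trajectory. -/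
def retOf (T : Traj S A) : ℝ := (T.steps.map fun x => x.2.2).sum

variable [DecidableEq S] [DecidableEq A]

/-- State visited at step `h` (1-indexed). -/
def sOf (T : Traj S A) (h : ℕ) : Option S := (T.steps[h - 1]?).map Prod.fst

/-- Action taken at step `h`. -/
def aOf (T : Traj S A) (h : ℕ) : Option A := (T.steps[h - 1]?).map fun x => x.2.1

/-- Reward received at step `h`. -/
def rOf (T : Traj S A) (h : ℕ) : ℝ := ((T.steps[h - 1]?).map fun x => x.2.2).getD 0

/-- State reached after step `h`. -/
def nxt (T : Traj S A) (h : ℕ) : S := ((T.steps[h]?).map Prod.fst).getD T.final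

/-- Whether trajectory `T` visits `(s,a)` at step `h`. -/
def hitSA (T : Traj S A) (h : ℕ) (s : S) (a : A) : Bool :=
  decide (sOf T h = some s) && decide (aOf T h = some a)

/-- `n_{s,a}` at step `h`: number of episodes in `D` visiting `(s,a)` at step `h`. -/
def nCount (D : List (Traj S A)) (h : ℕ) (s : S) (a : A) : ℕ :=
  (D.filter fun T => hitSA T h s a).length

/-- Plug-in estimator of the transition kernel. -/
def Phat (D : List (Traj S A)) (h : ℕ) (s : S) (a : A) (s' : S) : ℝ :=
  if nCount D h s a = 0 then (Fintype.card S : ℝ)⁻¹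
  else ((D.filter fun T => hitSA T h s a && decide (nxt T h = s')).length : ℝ) / nCount D h s a

/-- Plug-in estimator of the mean reward. -/
def rhat (D : List (Traj S A)) (h : ℕ) (s : S) (a : A) : ℝ :=
  if nCount D h s a = 0 then 0
  else ((D.filter fun T => hitSA T h s a).map fun T => rOf T h).sum / nCount D h s a

/-- Empirical distribution of a list of samples. -/
def empDist (l : List S) (s : S) : ℝ := ((l.filter (· = s)).length : ℝ) / l.length

/-- An action maximizing `f`. -/
def argmaxA [Nonempty A] (f : A → ℝ) : A :=
  Classical.choose (Finset.exists_max_image (Finset.univ : Finset A) f Finset.univ_nonempty)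

/-- The (deterministic) greedy policy with respect to `Q`. -/
def greedy [Nonempty A] (Q : ℕ → S → A → ℝ) : Policy S A where
  p h s a := if a = argmaxA (Q h s) then 1 else 0
  nonneg := by intro h s a; split <;> norm_num
  sum_one := by intro h s; simp

/-- VPVI (Hoeffding-style) pessimism penalty `Γ_h(s,a) = C·H·ι/√(max(n_{s,a},1))`. -/
def vpviGamma (Hor : ℕ) (D : List (Traj S A)) (Cc δ : ℝ) (h : ℕ) (s : S) (a : A) : ℝ :=
  Cc * Hor * iotaLog Hor (Fintype.card S) (Fintype.card A) δ /
    Real.sqrt ((max (nCount D h s a) 1 : ℕ) : ℝ)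

/-- VPVI value estimates (computed backwards, with truncation and greedy maximization). -/
def vpviV [Nonempty A] (Hor : ℕ) (D : List (Traj S A)) (Cc δ : ℝ) (h : ℕ) : S → ℝ :=
  if hh : Hor + 1 ≤ h then fun _ => 0
  else fun s =>
    Finset.univ.sup' Finset.univ_nonempty fun a =>
      max 0 (min ((rhat D h s a + ∑ s', Phat D h s a s' * vpviV Hor D Cc δ (h + 1) s')
          - vpviGamma Hor D Cc δ h s a) ((Hor : ℝ) - h + 1))
termination_by Hor + 1 - h
decreasing_by omega

/-- VPVI pessimistic truncated Q-estimates `Q̄_h`. -/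
def vpviQbar [Nonempty A] (Hor : ℕ) (D : List (Traj S A)) (Cc δ : ℝ) (h : ℕ) (s : S) (a : A) :
    ℝ :=
  max 0 (min ((rhat D h s a + ∑ s', Phat D h s a s' * vpviV Hor D Cc δ (h + 1) s')
      - vpviGamma Hor D Cc δ h s a) ((Hor : ℝ) - h + 1))

/-- Output policy of VPVI. -/
def vpviPolicy [Nonempty A] (Hor : ℕ) (D : List (Traj S A)) (Cc δ : ℝ) : Policy S A :=
  greedy (vpviQbar Hor D Cc δ)

/-- APVI Bernstein-style pessimism penalty. -/
def apviGamma (Hor : ℕ) (D : List (Traj S A)) (ι Cbig : ℝ) (h : ℕ) (s : S) (a : A)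
    (Vnext : S → ℝ) : ℝ :=
  if nCount D h s a = 0 then Cbig * Hor * ι
  else 2 * Real.sqrt (varDist (Phat D h s a) (fun s' => rhat D h s a + Vnext s') * ι /
        nCount D h s a)
      + 14 * Hor * ι / (3 * nCount D h s a)

/-- APVI value estimates. -/
def apviV [Nonempty A] (Hor : ℕ) (D : List (Traj S A)) (ι Cbig : ℝ) (h : ℕ) : S → ℝ :=
  if hh : Hor + 1 ≤ h then fun _ => 0
  else fun s =>
    Finset.univ.sup' Finset.univ_nonempty fun a =>
      max 0 (min ((rhat D h s a + ∑ s', Phat D h s a s' * apviV Hor D ι Cbig (h + 1) s')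
          - apviGamma Hor D ι Cbig h s a (apviV Hor D ι Cbig (h + 1))) ((Hor : ℝ) - h + 1))
termination_by Hor + 1 - h
decreasing_by all_goals omega

/-- APVI pessimistic truncated Q-estimates `Q̄_h`. -/
def apviQbar [Nonempty A] (Hor : ℕ) (D : List (Traj S A)) (ι Cbig : ℝ) (h : ℕ) (s : S) (a : A) :
    ℝ :=
  max 0 (min ((rhat D h s a + ∑ s', Phat D h s a s' * apviV Hor D ι Cbig (h + 1) s')
      - apviGamma Hor D ι Cbig h s a (apviV Hor D ι Cbig (h + 1))) ((Hor : ℝ) - h + 1))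

/-- Output policy of APVI. -/
def apviPolicy [Nonempty A] (Hor : ℕ) (D : List (Traj S A)) (ι Cbig : ℝ) : Policy S A :=
  greedy (apviQbar Hor D ι Cbig)

/-- The pessimistic augmented MDP `M†` over states `Option S` (`none` is the absorbing state
`s†`): transitions/rewards agree with `M` on the covered set `Cov`, and all uncovered pairs as
well as `s†` transition deterministically to `s†` with reward `0`. -/
def augMDP (M : FinMDP S A) (Cov : ℕ → S → A → Prop) : FinMDP (Option S) A where
  H := M.H
  P h os a os' :=
    match os, os' with
    | some s, some s' => if Cov h s a then M.P h s a s' else 0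
    | some s, none => if Cov h s a then 0 else 1
    | none, some _ => 0
    | none, none => 1
  R h os a :=
    match os with
    | some s => if Cov h s a then M.R h s a else PMF.pure 0
    | none => PMF.pure 0
  d1 os := match os with | some s => M.d1 s | none => 0
  P_nonneg := by
    intro h os a os'
    rcases os with _ | s <;> rcases os' with _ | s' <;> dsimp only <;> try norm_num
    · split <;> norm_num
    · split
      · exact M.P_nonneg _ _ _ _
      · norm_num
  P_sum := by
    intro h os a
    rcases os with _ | s
    · simp [Fintype.sum_option]
    · by_cases hc : Cov h s a <;> simp [Fintype.sum_option, hc, M.P_sum]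
  R_mem := by
    intro h os a x hx
    rcases os with _ | s
    · simp only [PMF.support_pure, Set.mem_singleton_iff] at hx
      simp [hx]
    · by_cases hc : Cov h s a
      · exact M.R_mem h s a x (by simpa [hc] using hx)
      · simp only [hc, if_false, PMF.support_pure, Set.mem_singleton_iff] at hx
        simp [hx]
  d1_nonneg := by
    intro os; rcases os with _ | s
    · norm_num
    · exact M.d1_nonneg s
  d1_sum := by simp [Fintype.sum_option, M.d1_sum]

/-- Extend a policy on `S` to `Option S` (arbitrarily: uniform at the absorbing state). -/
def liftPolicy [Nonempty A] (π : Policy S A) : Policy (Option S) A where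
  p h os a := match os with | some s => π.p h s a | none => (Fintype.card A : ℝ)⁻¹
  nonneg := by
    intro h os a; rcases os with _ | s <;> dsimp only
    · positivity
    · exact π.nonneg _ _ _
  sum_one := by
    intro h os; rcases os with _ | s <;> dsimp only
    · rw [Finset.sum_const, Finset.card_univ, nsmul_eq_mul]
      exact mul_inv_cancel₀ (Nat.cast_ne_zero.mpr Fintype.card_ne_zero)
    · exact π.sum_one _ _

/-- Restrict a policy on `Option S` to `S`. -/
def restrictPolicy (π : Policy (Option S) A) : Policy S A where
  p h s a := π.p h (some s) a
  nonneg h s a := π.nonneg h (some s) a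
  sum_one h s := π.sum_one h (some s)

/-- Empirical transition kernel of the (data-version) pessimistic augmented MDP `M̂†`. -/
def PhatDag (D : List (Traj S A)) (h : ℕ) : Option S → A → Option S → ℝ
  | some s, a, some s' => if nCount D h s a = 0 then 0 else Phat D h s a s'
  | some s, a, none => if nCount D h s a = 0 then 1 else 0
  | none, _, some _ => 0
  | none, _, none => 1

/-- Empirical reward of the (data-version) pessimistic augmented MDP `M̂†`. -/
def rhatDag (D : List (Traj S A)) (h : ℕ) : Option S → A → ℝ
  | some s, a => rhat D h s a
  | none, _ => 0

/-- Penalty of assumption-free APVI: Bernstein penalty on observed pairs, `0` otherwise. -/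
def afGamma (Hor : ℕ) (D : List (Traj S A)) (ι : ℝ) (h : ℕ) (os : Option S) (a : A)
    (Vnext : Option S → ℝ) : ℝ :=
  match os with
  | some s =>
      if nCount D h s a = 0 then 0
      else 2 * Real.sqrt (varDist (PhatDag D h (some s) a)
            (fun os' => rhatDag D h (some s) a + Vnext os') * ι / nCount D h s a)
          + 14 * Hor * ι / (3 * nCount D h s a)
  | none => 0

/-- Assumption-free APVI value estimates (on the empirical augmented MDP). -/
def afV [Nonempty A] (Hor : ℕ) (D : List (Traj S A)) (ι : ℝ) (h : ℕ) : Option S → ℝ :=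
  if hh : Hor + 1 ≤ h then fun _ => 0
  else fun os =>
    Finset.univ.sup' Finset.univ_nonempty fun a =>
      max 0 (min ((rhatDag D h os a + ∑ os', PhatDag D h os a os' * afV Hor D ι (h + 1) os')
          - afGamma Hor D ι h os a (afV Hor D ι (h + 1))) ((Hor : ℝ) - h + 1))
termination_by Hor + 1 - h
decreasing_by all_goals omega

/-- Assumption-free APVI pessimistic truncated Q-estimates. -/
def afQbar [Nonempty A] (Hor : ℕ) (D : List (Traj S A)) (ι : ℝ) (h : ℕ) (os : Option S) (a : A) :
    ℝ :=
  max 0 (min ((rhatDag D h os a + ∑ os', PhatDag D h os a os' * afV Hor D ι (h + 1) os')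
      - afGamma Hor D ι h os a (afV Hor D ι (h + 1))) ((Hor : ℝ) - h + 1))

/-- Output policy of assumption-free APVI, on the augmented state space. -/
def afPolicyAug [Nonempty A] (Hor : ℕ) (D : List (Traj S A)) (ι : ℝ) : Policy (Option S) A :=
  greedy (afQbar Hor D ι)

/-- Output policy of assumption-free APVI, restricted to the original state space. -/
def afPolicy [Nonempty A] (Hor : ℕ) (D : List (Traj S A)) (ι : ℝ) : Policy S A :=
  restrictPolicy (afPolicyAug Hor D ι)

/-- The local non-asymptotic minimax risk `𝔑_n(𝒫)` of an instance `𝒫 = (μ, M)`: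
`sup_{𝒫' ∈ 𝒢} inf_{π̂} max_{𝒬 ∈ {𝒫,𝒫'}} √n · E_𝒬[v⋆(𝒬) − v^{π̂}]`. -/
def locRisk (n : ℕ) (μ : Policy S A) (M : FinMDP S A) : ℝ :=
  ⨆ Q : {q : Policy S A × FinMDP S A // inG q.1 q.2},
    ⨅ est : List (Traj S A) → Policy S A,
      max (Real.sqrt n * pmfExp (iidPMF (episodePMF M μ) n) fun D => vstar M - vOf M (est D))
          (Real.sqrt n *
            pmfExp (iidPMF (episodePMF Q.1.2 Q.1.1) n) fun D => vstar Q.1.2 - vOf Q.1.2 (est D))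

end

/-- The covered set `𝒞_h = {(s,a) : d^μ_h(s,a) > 0}` as a predicate. -/
def covSet {S A : Type} [Fintype S] [Fintype A] (M : FinMDP S A) (μ : Policy S A) :
    ℕ → S → A → Prop :=
  fun h s a => 0 < dOcc M μ h s a

/-! On the original states, `M†` can only lose mass: its kernel agrees with `P` on covered pairs
and vanishes on uncovered ones, and the absorbing state never leads back. Hence, by induction on
`h`, the state marginals of `π` under `M†` lie pointwise below those under `M`, and multiplying
by `π_h(a|s)` gives the occupancy bound. -/

section OccupancyDomination

variable {S A : Type} [Fintype S] [Fintype A]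

theorem dState_nonneg (M : FinMDP S A) (π : Policy S A) : ∀ h s, 0 ≤ dState M π h s
  | 0, _ => le_rfl
  | 1, s => M.d1_nonneg s
  | h + 2, _ => by
    rw [dState]
    exact sum_nonneg fun s _ => sum_nonneg fun a _ =>
      mul_nonneg (mul_nonneg (dState_nonneg M π (h + 1) s) (π.nonneg _ _ _)) (M.P_nonneg _ _ _ _)

theorem augMDP_P_some_some_le (M : FinMDP S A) (Cov : ℕ → S → A → Prop) (h : ℕ) (s : S) (a : A)
    (s' : S) : (augMDP M Cov).P h (some s) a (some s') ≤ M.P h s a s' := by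
  show (if Cov h s a then M.P h s a s' else 0) ≤ M.P h s a s'
  split_ifs
  exacts [le_rfl, M.P_nonneg h s a s']

@[simp]
theorem augMDP_P_none_some (M : FinMDP S A) (Cov : ℕ → S → A → Prop) (h : ℕ) (a : A) (s' : S) :
    (augMDP M Cov).P h none a (some s') = 0 :=
  rfl

omit [Fintype S] in
@[simp]
theorem liftPolicy_p_some [Nonempty A] (π : Policy S A) (h : ℕ) (s : S) (a : A) :
    (liftPolicy π).p h (some s) a = π.p h s a :=
  rfl

theorem dState_augMDP_le [Nonempty A] (M : FinMDP S A) (Cov : ℕ → S → A → Prop)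
    (π : Policy S A) : ∀ h s, dState (augMDP M Cov) (liftPolicy π) h (some s) ≤ dState M π h s
  | 0, _ => le_rfl
  | 1, _ => le_rfl
  | h + 2, s' => by
    dsimp only [dState]
    rw [Fintype.sum_option]
    simp only [augMDP_P_none_some, mul_zero, sum_const_zero, zero_add, liftPolicy_p_some]
    refine sum_le_sum fun s _ => sum_le_sum fun a _ => ?_
    exact mul_le_mul
      (mul_le_mul_of_nonneg_right (dState_augMDP_le M Cov π (h + 1) s) (π.nonneg _ _ _))
      (augMDP_P_some_some_le M Cov _ s a s') ((augMDP M Cov).P_nonneg _ _ _ _)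
      (mul_nonneg (dState_nonneg M π _ s) (π.nonneg _ _ _))

theorem dOcc_augMDP_le [Nonempty A] (M : FinMDP S A) (Cov : ℕ → S → A → Prop) (π : Policy S A)
    (h : ℕ) (s : S) (a : A) : dOcc (augMDP M Cov) (liftPolicy π) h (some s) a ≤ dOcc M π h s a :=
  mul_le_mul_of_nonneg_right (dState_augMDP_le M Cov π h s) (π.nonneg h s a)

end OccupancyDomination

/-- **Lemma (occupancy domination).**
For every policy `π`, every `h ∈ [H]`, and every `(s,a) ∈ S×A`, the marginal occupancy under
the original MDP dominates that under the pessimistic augmented MDP: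
`d^π_h(s,a) ≥ d^{†π}_h(s,a)`. -/
theorem aug_mdp_occupancy_dominated :
    ∀ (S A : Type) [Fintype S] [Fintype A] [DecidableEq S] [DecidableEq A]
      [Nonempty S] [Nonempty A]
      (M : FinMDP S A) (μ π : Policy S A),
      ∀ h ∈ Finset.Icc 1 M.H, ∀ (s : S) (a : A),
        dOcc (augMDP M (covSet M μ)) (liftPolicy π) h (some s) a ≤ dOcc M π h s a := by
  intro S A _ _ _ _ _ _ M μ π h _ s a
  exact dOcc_augMDP_le M (covSet M μ) π h s a
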